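/- arXiv:2007.03208 — 6 statements merged into one kernel-verified Lean document; each statement's English description precedes it below -/
import Mathlib

section
/- Let x_1, ..., x_n be distinct points in ℝ^d such that for each k = 2, ..., n, x_k ∉ conv(x_1, ..., x_{k-1}). Then there exists a continuous quasi-convex function f : ℝ^d → ℝ with f(x_1) < f(x_2) < ... < f(x_n). In fact f can be taken convex. -/
/-!
Let `C k` be the convex hull of `x 0, …, x k` and `g k = infDist · (C k)`, a continuous convex
function. It vanishes at `x i` for `i ≤ k` and, the hull being closed, is positive at `x j` for
`j > k`. Weighting `g k` by `q ^ k`, with `q` large compared to (largest value)/(smallest positive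
value) of the `g k (x j)`, the term `k = i` alone at `x j` outweighs everything at `x i`, so the
convex function `∑ k, q ^ k * g k` is strictly increasing along the points.
-/

open Filter Finset Metric Topology

theorem ConvexOn.fun_sum {ι 𝕜 E β : Type*} [Semiring 𝕜] [PartialOrder 𝕜] [AddCommMonoid E]
    [AddCommMonoid β] [PartialOrder β] [IsOrderedAddMonoid β] [SMul 𝕜 E] [Module 𝕜 β]
    {t : Set E} (ht : Convex 𝕜 t) (s : Finset ι) {f : ι → E → β}
    (hf : ∀ i ∈ s, ConvexOn 𝕜 t (f i)) : ConvexOn 𝕜 t fun y => ∑ i ∈ s, f i y := by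
  rw [← Finset.sum_fn]
  exact Finset.sum_induction f (ConvexOn 𝕜 t) (fun _ _ => ConvexOn.add) (convexOn_const 0 ht) hf

theorem convexOn_univ_infDist {E : Type*} [NormedAddCommGroup E] [NormedSpace ℝ E] {C : Set E}
    (hC : Convex ℝ C) : ConvexOn ℝ Set.univ (infDist · C) := by
  rcases C.eq_empty_or_nonempty with rfl | hne
  · simpa only [infDist_empty] using convexOn_const (0 : ℝ) convex_univ
  refine ⟨convex_univ, fun p _ q _ a b ha hb hab => le_of_forall_pos_le_add fun ε hε => ?_⟩
  obtain ⟨u, hu, hpu⟩ := (infDist_lt_iff hne).1 (lt_add_of_pos_right (infDist p C) hε)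
  obtain ⟨v, hv, hqv⟩ := (infDist_lt_iff hne).1 (lt_add_of_pos_right (infDist q C) hε)
  calc infDist (a • p + b • q) C ≤ dist (a • p + b • q) (a • u + b • v) :=
        infDist_le_dist_of_mem (hC hu hv ha hb hab)
    _ ≤ dist (a • p) (a • u) + dist (b • q) (b • v) := dist_add_add_le _ _ _ _
    _ = a * dist p u + b * dist q v := by
        rw [dist_smul₀, dist_smul₀, Real.norm_of_nonneg ha, Real.norm_of_nonneg hb]
    _ ≤ a * (infDist p C + ε) + b * (infDist q C + ε) := by gcongr
    _ = a • infDist p C + b • infDist q C + ε := by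
        simp only [smul_eq_mul]; linear_combination ε * hab

theorem geom_sum_mul_lt_pow_mul {q ε D : ℝ} (hq : 0 ≤ q) (hε : 0 < ε) (hD : D ≤ (q - 1) * ε)
    (i : ℕ) : (∑ m ∈ range i, q ^ m) * D < q ^ i * ε :=
  calc (∑ m ∈ range i, q ^ m) * D ≤ (∑ m ∈ range i, q ^ m) * ((q - 1) * ε) := by gcongr
    _ = (q ^ i - 1) * ε := by rw [← mul_assoc, geom_sum_mul]
    _ < q ^ i * ε := by linarith

theorem Fin.sum_Iio_comp_val {M : Type*} [AddCommMonoid M] {n : ℕ} (f : ℕ → M) (i : Fin n) :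
    ∑ k ∈ Iio i, f k = ∑ m ∈ range i, f m := by
  rw [← Nat.Iio_eq_range, ← Fin.map_valEmbedding_Iio, sum_map]
  rfl

theorem exists_nonneg_weights_strictMono_sum {n : ℕ} (a : Fin n → Fin n → ℝ)
    (ha_zero : ∀ k i, i ≤ k → a k i = 0) (ha_pos : ∀ k j, k < j → 0 < a k j) :
    ∃ c : Fin n → ℝ, (∀ k, 0 ≤ c k) ∧ StrictMono fun i => ∑ k, c k * a k i := by
  have ha_nonneg : ∀ k i, 0 ≤ a k i := fun k i =>
    (le_or_gt i k).elim (fun h => (ha_zero k i h).ge) fun h => (ha_pos k i h).le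
  have hε_ev : ∀ᶠ ε in 𝓝[>] (0 : ℝ), 0 < ε ∧ ∀ k j, k < j → ε ≤ a k j :=
    eventually_mem_nhdsWithin.and <| eventually_all.2 fun k => eventually_all.2 fun j =>
      eventually_imp_distrib_left.2 fun hkj =>
        Eventually.mono (Ioo_mem_nhdsGT (ha_pos k j hkj)) fun _ h => h.2.le
  obtain ⟨ε, hε, hεa⟩ := hε_ev.exists
  obtain ⟨D, hD, hDa⟩ : ∃ D, 0 ≤ D ∧ ∀ k i, a k i ≤ D :=
    ((eventually_ge_atTop 0).and <| eventually_all.2 fun k => eventually_all.2 fun i =>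
      eventually_ge_atTop (a k i)).exists
  set q := 1 + D / ε
  have hq : 0 ≤ q := by positivity
  refine ⟨fun k => q ^ (k : ℕ), fun k => pow_nonneg hq _, fun i j hij => ?_⟩
  calc ∑ k : Fin n, q ^ (k : ℕ) * a k i = ∑ k ∈ Iio i, q ^ (k : ℕ) * a k i := by
        refine (sum_subset (subset_univ _) fun k _ hk => ?_).symm
        rw [ha_zero k i (not_lt.1 (mem_Iio.not.1 hk)), mul_zero]
    _ ≤ ∑ k ∈ Iio i, q ^ (k : ℕ) * D := by gcongr with k; exact hDa k i
    _ = (∑ m ∈ range i, q ^ m) * D := by rw [← sum_mul, Fin.sum_Iio_comp_val (q ^ ·)]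
    _ < q ^ (i : ℕ) * ε :=
        geom_sum_mul_lt_pow_mul hq hε (by rw [add_sub_cancel_left, div_mul_cancel₀ _ hε.ne']) i
    _ ≤ q ^ (i : ℕ) * a i j := by gcongr; exact hεa i j hij
    _ ≤ ∑ k : Fin n, q ^ (k : ℕ) * a k j :=
        single_le_sum (f := fun k : Fin n => q ^ (k : ℕ) * a k j)
          (fun k _ => mul_nonneg (pow_nonneg hq _) (ha_nonneg k j)) (mem_univ i)

theorem stmt1_general {d n : ℕ} (x : Fin n → EuclideanSpace ℝ (Fin d))
    (h : ∀ k : Fin n, x k ∉ convexHull ℝ (x '' {j | j < k})) :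
    ∃ f : EuclideanSpace ℝ (Fin d) → ℝ, Continuous f ∧
      ConvexOn ℝ Set.univ f ∧ (∀ ℓ : ℝ, Convex ℝ {y | f y < ℓ}) ∧
      ∀ i j : Fin n, i < j → f (x i) < f (x j) := by
  set C : Fin n → Set (EuclideanSpace ℝ (Fin d)) := fun k => convexHull ℝ (x '' Set.Iic k)
  have hx_mem : ∀ i k, i ≤ k → x i ∈ C k := fun i k hik =>
    subset_convexHull ℝ _ (Set.mem_image_of_mem x hik)
  have hx_pos : ∀ k j, k < j → 0 < infDist (x j) (C k) := by
    intro k j hkj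
    have hC_closed : IsClosed (C k) :=
      ((Set.finite_Iic k).image x).isCompact_convexHull ℝ |>.isClosed
    refine (hC_closed.notMem_iff_infDist_pos ⟨x k, hx_mem k k le_rfl⟩).1 fun hj => h j ?_
    exact convexHull_mono (Set.image_mono fun i (hi : i ≤ k) => hi.trans_lt hkj) hj
  obtain ⟨c, hc, hmono⟩ := exists_nonneg_weights_strictMono_sum (fun k i => infDist (x i) (C k))
    (fun k i hik => infDist_zero_of_mem (hx_mem i k hik)) hx_pos
  have hconv : ConvexOn ℝ Set.univ fun y => ∑ k, c k * infDist y (C k) :=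
    .fun_sum convex_univ _ fun k _ => (convexOn_univ_infDist (convex_convexHull ℝ _)).smul (hc k)
  refine ⟨_, by fun_prop, hconv, fun ℓ => by simpa using hconv.convex_lt ℓ, fun i j => @hmono i j⟩

/-- If each point lies outside the convex hull of its predecessors, there exists a
continuous (quasi-)convex function strictly increasing along the points. -/
theorem stmt1 {d n : ℕ} (x : Fin n → EuclideanSpace ℝ (Fin d))
    (hx : Function.Injective x)
    (h : ∀ k : Fin n, x k ∉ convexHull ℝ (x '' {j | j < k})) :
    ∃ f : EuclideanSpace ℝ (Fin d) → ℝ, Continuous f ∧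
      ConvexOn ℝ Set.univ f ∧ (∀ ℓ : ℝ, Convex ℝ {y | f y < ℓ}) ∧
      ∀ i j : Fin n, i < j → f (x i) < f (x j) :=
  stmt1_general x h
end

section
/- Let f_1, ..., f_m : K → ℝ be differentiable quasi-convex functions on an open convex set K ⊆ ℝ^d, and let x_0 ∈ K with ∇f_i(x_0) ≠ 0 for all i. If the conic hull of {∇f_1(x_0), ..., ∇f_m(x_0)} equals ℝ^d, then ⋂_{i=1}^m {x ∈ K : f_i(x) < f_i(x_0)} = ∅. -/
/-- The conic hull of a set `S`: all finite nonnegative linear combinations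
of elements of `S`. -/
def coneS {d : ℕ} (S : Set (EuclideanSpace ℝ (Fin d))) : Set (EuclideanSpace ℝ (Fin d)) :=
  {y | ∃ (k : ℕ) (c : Fin k → ℝ) (u : Fin k → EuclideanSpace ℝ (Fin d)),
    (∀ i, 0 ≤ c i) ∧ (∀ i, u i ∈ S) ∧ y = ∑ i, c i • u i}

/-! A function whose strict sublevel sets are convex decreases from `x₀` towards any point
where it is at most its value at `x₀`, so its gradient makes an obtuse angle with that
direction. If the gradients at `x₀` conically span the whole space, the only such direction is
`0`, and `x₀` itself lies in no strict sublevel set. With no functions at all the conic hull is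
`{0}`, which is not the whole space because `0 < d`. -/

open scoped InnerProductSpace

theorem isMaxOn_segment_of_le {𝕜 E β : Type*} [Semiring 𝕜] [PartialOrder 𝕜]
    [AddCommMonoid E] [SMul 𝕜 E] [LinearOrder β] {K : Set E} {g : E → β}
    (hq : ∀ ℓ, Convex 𝕜 {x ∈ K | g x < ℓ}) {x₀ x : E} (hx₀ : x₀ ∈ K) (hx : x ∈ K)
    (hle : g x ≤ g x₀) : IsMaxOn g (segment 𝕜 x₀ x) x₀ := by
  intro y hy
  show g y ≤ g x₀
  by_contra! hlt
  have hy_mem : y ∈ {z ∈ K | g z < g y} :=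
    (hq (g y)).segment_subset ⟨hx₀, hlt⟩ ⟨hx, hle.trans_lt hlt⟩ hy
  exact lt_irrefl _ hy_mem.2

theorem inner_gradient_sub_nonpos_of_isMaxOn_segment {E : Type*} [NormedAddCommGroup E]
    [InnerProductSpace ℝ E] [CompleteSpace E] {g : E → ℝ} {x₀ x : E}
    (hg : DifferentiableAt ℝ g x₀) (hmax : IsMaxOn g (segment ℝ x₀ x) x₀) :
    ⟪gradient g x₀, x - x₀⟫_ℝ ≤ 0 :=
  hmax.localize.hasFDerivWithinAt_nonpos hg.hasGradientAt.hasFDerivAt.hasFDerivWithinAt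
    (sub_mem_posTangentConeAt_of_segment_subset subset_rfl)

theorem eq_zero_of_mem_coneS_of_inner_nonpos {d : ℕ} {S : Set (EuclideanSpace ℝ (Fin d))}
    {v : EuclideanSpace ℝ (Fin d)} (hv : v ∈ coneS S) (hS : ∀ u ∈ S, ⟪u, v⟫_ℝ ≤ 0) :
    v = 0 := by
  obtain ⟨k, c, u, hc, hu, rfl⟩ := hv
  have hself : ⟪∑ i, c i • u i, ∑ i, c i • u i⟫_ℝ ≤ 0 := by
    rw [sum_inner]
    refine Finset.sum_nonpos fun i _ => ?_
    rw [real_inner_smul_left]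
    exact mul_nonpos_of_nonneg_of_nonpos (hc i) (hS _ (hu i))
  exact real_inner_self_nonpos.mp hself

theorem stmt11_general {d m : ℕ} (hd : 0 < d) (K : Set (EuclideanSpace ℝ (Fin d)))
    (f : Fin m → EuclideanSpace ℝ (Fin d) → ℝ)
    (hdiff : ∀ i, ∀ x ∈ K, DifferentiableAt ℝ (f i) x)
    (hq : ∀ i (ℓ : ℝ), Convex ℝ {x ∈ K | f i x < ℓ})
    (x₀ : EuclideanSpace ℝ (Fin d)) (hx₀ : x₀ ∈ K)
    (hcone : coneS (Set.range fun i => gradient (f i) x₀) = Set.univ) :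
    ⋂ i, {x ∈ K | f i x < f i x₀} = ∅ := by
  have hcone_zero : ∀ v, (∀ i, ⟪gradient (f i) x₀, v⟫_ℝ ≤ 0) → v = 0 := by
    intro v hv
    refine eq_zero_of_mem_coneS_of_inner_nonpos (hcone ▸ Set.mem_univ v) ?_
    rintro _ ⟨i, rfl⟩
    exact hv i
  refine Set.eq_empty_of_forall_notMem fun x hx => ?_
  rw [Set.mem_iInter] at hx
  have hdesc : ∀ i, ⟪gradient (f i) x₀, x - x₀⟫_ℝ ≤ 0 := fun i =>
    inner_gradient_sub_nonpos_of_isMaxOn_segment (hdiff i x₀ hx₀)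
      (isMaxOn_segment_of_le (hq i) hx₀ (hx i).1 (hx i).2.le)
  obtain rfl : x = x₀ := sub_eq_zero.mp (hcone_zero _ hdesc)
  have : IsEmpty (Fin m) := ⟨fun i => lt_irrefl _ (hx i).2⟩
  have hsingle : EuclideanSpace.single (⟨0, hd⟩ : Fin d) (1 : ℝ) ≠ 0 := by simp
  exact hsingle (hcone_zero _ isEmptyElim)

/-- If the gradients of differentiable quasi-convex functions at `x₀` are nonzero and
their conic hull is all of `ℝ^d`, then the intersection of the strict sublevel sets at
`x₀` is empty. -/
theorem stmt11 {d m : ℕ} (hd : 0 < d) (K : Set (EuclideanSpace ℝ (Fin d)))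
    (hKo : IsOpen K) (hKc : Convex ℝ K)
    (f : Fin m → EuclideanSpace ℝ (Fin d) → ℝ)
    (hdiff : ∀ i, ∀ x ∈ K, DifferentiableAt ℝ (f i) x)
    (hq : ∀ i (ℓ : ℝ), Convex ℝ {x ∈ K | f i x < ℓ})
    (x₀ : EuclideanSpace ℝ (Fin d)) (hx₀ : x₀ ∈ K)
    (hgrad : ∀ i, gradient (f i) x₀ ≠ 0)
    (hcone : coneS (Set.range fun i => gradient (f i) x₀) = Set.univ) :
    ⋂ i, {x ∈ K | f i x < f i x₀} = ∅ :=
  stmt11_general hd K f hdiff hq x₀ hx₀ hcone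
end

section
/- Let V = {v_1, ..., v_m} be nonzero vectors in ℝ^d. Then cone(V) = span(V) if and only if for each i ∈ [m], −v_i ∈ cone(V \ {v_i}). -/
lemma coneS_eq_span {d : ℕ} (S : Set (EuclideanSpace ℝ (Fin d))) :
    coneS S = ↑(Submodule.span {c : ℝ // 0 ≤ c} S) := by
  ext y
  constructor
  · rintro ⟨k, c, u, hc, hu, rfl⟩
    exact Submodule.sum_mem _ fun i _ =>
      Submodule.smul_mem _ (⟨c i, hc i⟩ : {c : ℝ // 0 ≤ c}) (Submodule.subset_span (hu i))
  · intro hy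
    induction hy using Submodule.span_induction with
    | mem x hx =>
      exact ⟨1, fun _ => 1, fun _ => x, fun _ => zero_le_one, fun _ => hx, by simp⟩
    | zero => exact ⟨0, fun i => 0, fun i => i.elim0, fun i => i.elim0, fun i => i.elim0, by simp⟩
    | add a b _ _ ha hb =>
      obtain ⟨k1, c1, u1, hc1, hu1, rfl⟩ := ha
      obtain ⟨k2, c2, u2, hc2, hu2, rfl⟩ := hb
      refine ⟨k1 + k2, Fin.addCases c1 c2, Fin.addCases u1 u2, ?_, ?_, ?_⟩
      · intro i
        refine Fin.addCases (fun j => ?_) (fun j => ?_) i <;> simp [hc1, hc2]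
      · intro i
        refine Fin.addCases (fun j => ?_) (fun j => ?_) i <;> simp [hu1, hu2]
      · rw [Fin.sum_univ_add]
        simp
    | smul r x _ hx =>
      obtain ⟨k, c, u, hc, hu, rfl⟩ := hx
      refine ⟨k, fun i => (r : ℝ) * c i, u, fun i => mul_nonneg r.2 (hc i), hu, ?_⟩
      have hr : ∀ x : EuclideanSpace ℝ (Fin d), r • x = (r : ℝ) • x := fun _ => rfl
      rw [hr, Finset.smul_sum]
      simp [smul_smul]

theorem coneS_mono {d : ℕ} {S T : Set (EuclideanSpace ℝ (Fin d))} (h : S ⊆ T) :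
    coneS S ⊆ coneS T := by
  rintro y ⟨k, c, u, hc, hu, rfl⟩
  exact ⟨k, c, u, hc, fun i => h (hu i), rfl⟩

/-- For nonzero vectors `v₁, ..., v_m`, the conic hull equals the linear span iff
`-vᵢ` lies in the conic hull of the other vectors, for each `i`. -/
theorem stmt13 {d m : ℕ} (v : Fin m → EuclideanSpace ℝ (Fin d))
    (hv : ∀ i, v i ≠ 0) :
    coneS (Set.range v) = ↑(Submodule.span ℝ (Set.range v)) ↔
      ∀ i, -v i ∈ coneS (Set.range v \ {v i}) := by
  constructor
  · intro h i
    have h1 : -v i ∈ coneS (Set.range v) := by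
      rw [h]
      exact Submodule.neg_mem _ (Submodule.subset_span ⟨i, rfl⟩)
    obtain ⟨k, c, u, hc, hu, hsum⟩ := h1
    classical
    set t : ℝ := ∑ j ∈ Finset.univ.filter (fun j => u j = v i), c j with ht_def
    have ht : 0 ≤ t := Finset.sum_nonneg fun j _ => hc j
    set w : EuclideanSpace ℝ (Fin d) :=
      ∑ j ∈ Finset.univ.filter (fun j => ¬ u j = v i), c j • u j with hw_def
    have hsplit : -v i = t • v i + w := by
      rw [hsum, ← Finset.sum_filter_add_sum_filter_not Finset.univ (fun j => u j = v i)]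
      congr 1
      rw [ht_def, Finset.sum_smul]
      exact Finset.sum_congr rfl fun j hj => by
        rw [Finset.mem_filter] at hj; rw [hj.2]
    have hw : w ∈ Submodule.span {c : ℝ // 0 ≤ c} (Set.range v \ {v i}) := by
      refine Submodule.sum_mem _ fun j hj => ?_
      rw [Finset.mem_filter] at hj
      exact Submodule.smul_mem _ (⟨c j, hc j⟩ : {c : ℝ // 0 ≤ c})
        (Submodule.subset_span ⟨hu j, hj.2⟩)
    have h1t : (0:ℝ) < 1 + t := by linarith
    have hkey : -v i = (1 + t)⁻¹ • w := by
      have hw' : w = (1 + t) • (-v i) := by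
        linear_combination (norm := module) -hsplit
      rw [hw', smul_smul, inv_mul_cancel₀ h1t.ne', one_smul]
    rw [coneS_eq_span]
    rw [hkey]
    exact Submodule.smul_mem _ (⟨(1 + t)⁻¹, by positivity⟩ : {c : ℝ // 0 ≤ c}) hw
  · intro H
    ext x
    constructor
    · rintro ⟨k, c, u, hc, hu, rfl⟩
      exact Submodule.sum_mem _ fun j _ =>
        Submodule.smul_mem _ _ (Submodule.subset_span (hu j))
    · intro hx
      rw [SetLike.mem_coe, Submodule.mem_span_range_iff_exists_fun] at hx
      obtain ⟨c, rfl⟩ := hx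
      rw [coneS_eq_span]
      refine Submodule.sum_mem _ fun j _ => ?_
      rcases le_or_gt 0 (c j) with hcj | hcj
      · exact Submodule.smul_mem _ (⟨c j, hcj⟩ : {c : ℝ // 0 ≤ c})
          (Submodule.subset_span ⟨j, rfl⟩)
      · have : c j • v j = (-c j) • (-v j) := by module
        rw [this]
        have hnv : -v j ∈ Submodule.span {c : ℝ // 0 ≤ c} (Set.range v) := by
          have := coneS_mono (Set.diff_subset) (H j)
          rwa [coneS_eq_span] at this
        exact Submodule.smul_mem _ (⟨-c j, by linarith⟩ : {c : ℝ // 0 ≤ c}) hnv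
end

section
/- Let V = {v_1, ..., v_m} ⊆ ℝ^d be a set of vectors in general direction, meaning every subset of V of size at most d is linearly independent. Then either cone(V) = ℝ^d or cone(V) is salient. -/
/-- Membership in the conic hull of the range of `v` is equivalent to being a
nonnegative combination of the `v i`. -/
lemma coneS_range_iff {d m : ℕ} (v : Fin m → EuclideanSpace ℝ (Fin d))
    (y : EuclideanSpace ℝ (Fin d)) :
    y ∈ coneS (Set.range v) ↔
      ∃ a : Fin m → ℝ, (∀ i, 0 ≤ a i) ∧ y = ∑ i, a i • v i := by
  constructor
  · rintro ⟨k, c, u, hc, hu, rfl⟩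
    choose f hf using hu
    refine ⟨fun j => ∑ i ∈ Finset.univ.filter (fun i => f i = j), c i,
      fun j => Finset.sum_nonneg (fun i _ => hc i), ?_⟩
    have : ∀ j, (∑ i ∈ Finset.univ.filter (fun i => f i = j), c i) • v j
        = ∑ i ∈ Finset.univ.filter (fun i => f i = j), c i • u i := by
      intro j
      rw [Finset.sum_smul]
      refine Finset.sum_congr rfl (fun i hi => ?_)
      rw [Finset.mem_filter] at hi
      rw [← hf i, hi.2]
    rw [Finset.sum_congr rfl (fun j _ => this j)]
    exact (Finset.sum_fiberwise Finset.univ f (fun i => c i • u i)).symm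
  · rintro ⟨a, ha, rfl⟩
    exact ⟨m, a, v, ha, fun i => Set.mem_range_self i, rfl⟩

/-- If `v₁, ..., v_m` are in general direction (every subset of size at most `d` is
linearly independent), then their conic hull is either all of `ℝ^d` or salient. -/
theorem stmt14 {d m : ℕ} (v : Fin m → EuclideanSpace ℝ (Fin d))
    (hgen : ∀ s : Finset (Fin m), s.card ≤ d →
      LinearIndependent ℝ (fun i : s => v i)) :
    coneS (Set.range v) = Set.univ ∨
      ∀ w ∈ coneS (Set.range v), -w ∈ coneS (Set.range v) → w = 0 := by
  by_cases hsal : ∀ w ∈ coneS (Set.range v), -w ∈ coneS (Set.range v) → w = 0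
  · exact Or.inr hsal
  left
  push_neg at hsal
  obtain ⟨w, hw, hw', hw0⟩ := hsal
  rw [coneS_range_iff] at hw hw'
  obtain ⟨a, ha, hae⟩ := hw
  obtain ⟨b, hb, hbe⟩ := hw'
  set e : Fin m → ℝ := fun i => a i + b i with he
  have he0 : ∀ i, 0 ≤ e i := fun i => add_nonneg (ha i) (hb i)
  have hsum : ∑ i, e i • v i = 0 := by
    have h1 : ∑ i, e i • v i = (∑ i, a i • v i) + (∑ i, b i • v i) := by
      rw [← Finset.sum_add_distrib]
      exact Finset.sum_congr rfl (fun i _ => add_smul (a i) (b i) (v i))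
    rw [h1, ← hae, ← hbe, add_neg_cancel]
  -- e is not identically 0
  have hne : ∃ i, e i ≠ 0 := by
    by_contra h
    push_neg at h
    apply hw0
    have ha0 : ∀ i, a i = 0 := by
      intro i
      have := h i
      have hb' := hb i
      have ha' := ha i
      simp only [he] at this
      linarith
    rw [hae]
    simp [ha0]
  set T : Finset (Fin m) := Finset.univ.filter (fun i => 0 < e i) with hT
  have hmemT : ∀ i, i ∈ T ↔ 0 < e i := by
    intro i; simp [hT]
  -- sum over T is 0
  have hsumT : ∑ i ∈ T, e i • v i = 0 := by
    rw [← hsum]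
    refine Finset.sum_subset (Finset.subset_univ T) (fun i _ hi => ?_)
    have : e i = 0 := by
      have := he0 i
      have h2 : ¬ 0 < e i := fun h => hi ((hmemT i).mpr h)
      linarith
    simp [this]
  -- T has more than d elements
  have hcard : d < T.card := by
    by_contra h
    push_neg at h
    have hli := hgen T h
    rw [Fintype.linearIndependent_iff] at hli
    obtain ⟨i0, hi0⟩ := hne
    have hi0T : i0 ∈ T := (hmemT i0).mpr (lt_of_le_of_ne (he0 i0) (Ne.symm hi0))
    have := hli (fun i => e i) ?_ ⟨i0, hi0T⟩
    · exact hi0 this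
    · rw [← hsumT]
      exact Finset.sum_attach T (fun i => e i • v i)
  -- for j ∈ T, -v j is a nonneg combination of v
  have hneg : ∀ j ∈ T, -(v j) ∈ coneS (Set.range v) := by
    intro j hj
    have hej : 0 < e j := (hmemT j).mp hj
    rw [coneS_range_iff]
    refine ⟨fun i => if i = j then 0 else e i / e j, ?_, ?_⟩
    · intro i
      dsimp only
      split
      · exact le_refl 0
      · exact div_nonneg (he0 i) (le_of_lt hej)
    · have h1 : ∑ i, (if i = j then (0:ℝ) else e i) • v i = -(e j • v j) := by
        have h2 : ∀ i : Fin m, (if i = j then (0:ℝ) else e i) • v i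
            = e i • v i - (if i = j then e i • v i else 0) := by
          intro i
          split <;> simp
        rw [Finset.sum_congr rfl (fun i _ => h2 i), Finset.sum_sub_distrib, hsum,
          Finset.sum_ite_eq' Finset.univ j (fun i => e i • v i)]
        simp
      have h3 : ∑ i, (if i = j then (0:ℝ) else e i / e j) • v i
          = (e j)⁻¹ • ∑ i, (if i = j then (0:ℝ) else e i) • v i := by
        rw [Finset.smul_sum]
        refine Finset.sum_congr rfl (fun i _ => ?_)
        rw [smul_smul]
        congr 1
        split <;> simp [div_eq_inv_mul, mul_comm]
      rw [h3, h1, smul_neg, smul_smul, inv_mul_cancel₀ (ne_of_gt hej), one_smul]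
  -- cone contains v j for all j
  have hmemv : ∀ j, v j ∈ coneS (Set.range v) := by
    intro j
    rw [coneS_range_iff]
    refine ⟨fun i => if i = j then 1 else 0, fun i => by dsimp only; split <;> norm_num, ?_⟩
    simp [ite_smul]
  -- closure properties via the characterization
  have hadd : ∀ x y, x ∈ coneS (Set.range v) → y ∈ coneS (Set.range v) →
      x + y ∈ coneS (Set.range v) := by
    intro x y hx hy
    rw [coneS_range_iff] at *
    obtain ⟨p, hp, rfl⟩ := hx
    obtain ⟨q, hq, rfl⟩ := hy
    refine ⟨fun i => p i + q i, fun i => add_nonneg (hp i) (hq i), ?_⟩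
    rw [← Finset.sum_add_distrib]
    exact Finset.sum_congr rfl (fun i _ => (add_smul (p i) (q i) (v i)).symm)
  have hsmul : ∀ (t : ℝ) x, 0 ≤ t → x ∈ coneS (Set.range v) →
      t • x ∈ coneS (Set.range v) := by
    intro t x ht hx
    rw [coneS_range_iff] at *
    obtain ⟨p, hp, rfl⟩ := hx
    refine ⟨fun i => t * p i, fun i => mul_nonneg ht (hp i), ?_⟩
    rw [Finset.smul_sum]
    refine Finset.sum_congr rfl (fun i _ => ?_)
    dsimp only
    rw [smul_smul]
  have hzero : (0 : EuclideanSpace ℝ (Fin d)) ∈ coneS (Set.range v) := by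
    rw [coneS_range_iff]
    exact ⟨fun _ => 0, fun _ => le_refl 0, by simp⟩
  -- pick a subset T' of T of size d
  obtain ⟨T', hT'sub, hT'card⟩ := Finset.exists_subset_card_eq (le_of_lt hcard)
  have hli' := hgen T' (le_of_eq hT'card)
  have hspan : Submodule.span ℝ (Set.range (fun i : T' => v i)) = ⊤ := by
    apply Submodule.eq_top_of_finrank_eq
    rw [finrank_span_eq_card hli', Fintype.card_coe, hT'card, finrank_euclideanSpace_fin]
  ext x
  simp only [Set.mem_univ, iff_true]
  have hx : x ∈ Submodule.span ℝ (Set.range (fun i : T' => v i)) := by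
    rw [hspan]; trivial
  rw [Submodule.mem_span_range_iff_exists_fun] at hx
  obtain ⟨r, hr⟩ := hx
  rw [← hr]
  refine Finset.sum_induction _ (· ∈ coneS (Set.range v)) hadd hzero ?_
  intro i _
  rcases le_or_gt 0 (r i) with hri | hri
  · exact hsmul _ _ hri (hmemv i)
  · have : r i • v (i : Fin m) = (-(r i)) • (-(v (i : Fin m))) := by
      rw [smul_neg, neg_smul, neg_neg]
    rw [this]
    exact hsmul _ _ (by linarith) (hneg i (hT'sub i.2))
end

section
/- Let f_1, ..., f_m : K → ℝ be quasi-convex C^1 functions on an open convex set K ⊆ ℝ^d. Then the set Cent_1 := {x ∈ K : cone({∇f_1(x), ..., ∇f_m(x)}) = ℝ^d} is open in K. -/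
/-!
The conic hull of a set `s` in a finite-dimensional real inner product space is the whole space
iff every direction `u ≠ 0` has some `x ∈ s` with `⟪x, u⟫ > 0`: otherwise a supporting
functional at `0` of the (full-dimensional) hull would be nonpositive on all of `s`. For a finite
family `g`, by compactness of the unit sphere the condition `∀ u, ∃ i, 0 < ⟪g i, u⟫` is open in
`g`, and the gradients of `C¹` functions depend continuously on the point.
-/

open Filter Topology
open scoped RealInnerProductSpace

lemma coneS_eq_hull {d : ℕ} (S : Set (EuclideanSpace ℝ (Fin d))) :
    coneS S = PointedCone.hull ℝ S := by
  ext y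
  constructor
  · rintro ⟨k, c, u, hc, hu, rfl⟩
    exact sum_mem fun i _ =>
      (PointedCone.hull ℝ S).smul_mem (hc i) (PointedCone.subset_hull (hu i))
  · intro hy
    obtain ⟨k, c, u, rfl⟩ := Submodule.mem_span_set'.1 hy
    exact ⟨k, fun i => c i, fun i => u i, fun i => (c i).2, fun i => (u i).2, rfl⟩

lemma PointedCone.eq_top_of_mem_nhds_zero {E : Type*} [AddCommGroup E] [TopologicalSpace E]
    [Module ℝ E] [ContinuousSMul ℝ E] {C : PointedCone ℝ E} (hC : (C : Set E) ∈ 𝓝 0) :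
    C = ⊤ := by
  refine eq_top_iff.2 fun y _ => ?_
  have hsmul : ∀ᶠ t : ℝ in 𝓝 0, t • y ∈ C :=
    (Continuous.tendsto' (by fun_prop) 0 0 (zero_smul ℝ y)).eventually hC
  have hpos : ∀ᶠ t : ℝ in 𝓝[>] 0, 0 < t := self_mem_nhdsWithin
  obtain ⟨t, hty, ht⟩ := ((hsmul.filter_mono nhdsWithin_le_nhds).and hpos).exists
  exact (C.smul_mem_iff ht).1 hty

section InnerProductSpace

variable {E : Type*} [NormedAddCommGroup E] [InnerProductSpace ℝ E]

lemma ContDiffOn.continuousOn_gradient [CompleteSpace E] {f : E → ℝ} {K : Set E}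
    (hf : ContDiffOn ℝ 1 f K) (hK : IsOpen K) : ContinuousOn (gradient f) K :=
  (InnerProductSpace.toDual ℝ E).symm.continuous.comp_continuousOn
    (hf.continuousOn_fderiv_of_isOpen hK le_rfl)

variable [FiniteDimensional ℝ E]

lemma Submodule.span_eq_top_of_forall_exists_inner_pos {s : Set E}
    (h : ∀ u ≠ 0, ∃ x ∈ s, 0 < ⟪x, u⟫) : Submodule.span ℝ s = ⊤ := by
  by_contra hs
  obtain ⟨u, hu, hu0⟩ := Submodule.exists_mem_ne_zero_of_ne_bot
    (mt (Submodule.orthogonal_eq_bot_iff).1 hs)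
  obtain ⟨x, hx, hxu⟩ := h u hu0
  rw [(Submodule.mem_orthogonal _ _).1 hu x (Submodule.subset_span hx)] at hxu
  exact hxu.false

lemma PointedCone.hull_eq_top_iff_forall_exists_inner_pos {s : Set E} :
    PointedCone.hull ℝ s = ⊤ ↔ ∀ u ≠ 0, ∃ x ∈ s, 0 < ⟪x, u⟫ := by
  constructor
  · intro h u hu
    by_contra! hle
    have hdual : PointedCone.hull ℝ s ≤ (ProperCone.innerDual {-u} : PointedCone ℝ E) :=
      Submodule.span_le.2 fun x hx => by simpa [inner_neg_left, real_inner_comm] using hle x hx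
    have hu_dual := hdual (h ▸ Submodule.mem_top : u ∈ PointedCone.hull ℝ s)
    simp only [ProperCone.mem_toPointedCone, ProperCone.mem_innerDual, Set.mem_singleton_iff,
      forall_eq, inner_neg_left, Left.nonneg_neg_iff, real_inner_self_nonpos] at hu_dual
    exact hu hu_dual
  · intro h
    set C := PointedCone.hull ℝ s
    have hspan : affineSpan ℝ (insert 0 s) = ⊤ := by
      apply AffineSubspace.coe_injective
      rw [affineSpan_insert_zero, Submodule.span_eq_top_of_forall_exists_inner_pos h]
      rfl
    have hint : (interior (C : Set E)).Nonempty :=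
      C.convex.interior_nonempty_iff_affineSpan_eq_top.2 <| eq_top_iff.2 <|
        hspan ▸ affineSpan_mono ℝ (Set.insert_subset C.zero_mem PointedCone.subset_hull)
    refine C.eq_top_of_mem_nhds_zero (mem_interior_iff_mem_nhds.1 ?_)
    by_contra h0
    obtain ⟨φ, hφ, hφC⟩ := geometric_hahn_banach_of_nonempty_interior_point C.convex h0 hint
    set u := (InnerProductSpace.toDual ℝ E).symm φ
    have hu : u ≠ 0 := by simpa [u] using hφ
    obtain ⟨x, hx, hxu⟩ := h u hu
    have hφx := hφC x (PointedCone.subset_hull hx)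
    rw [map_zero, ← InnerProductSpace.toDual_symm_apply, real_inner_comm] at hφx
    linarith

lemma isOpen_setOf_hull_range_eq_top {ι : Type*} [Finite ι] :
    IsOpen {g : ι → E | PointedCone.hull ℝ (Set.range g) = ⊤} := by
  have hsphere : {g : ι → E | PointedCone.hull ℝ (Set.range g) = ⊤} =
      {g | ∀ u ∈ Metric.sphere (0 : E) 1, ∃ i, 0 < ⟪g i, u⟫} := by
    ext g
    simp only [Set.mem_ofPred_eq, PointedCone.hull_eq_top_iff_forall_exists_inner_pos,
      Set.exists_range_iff]
    refine ⟨fun h u hu => h u (ne_zero_of_mem_sphere one_ne_zero ⟨u, hu⟩), fun h u hu => ?_⟩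
    obtain ⟨i, hi⟩ := h (‖u‖⁻¹ • u) (by simp [norm_smul, hu])
    rw [real_inner_smul_right] at hi
    exact ⟨i, pos_of_mul_pos_right hi (by positivity)⟩
  rw [hsphere, isOpen_iff_mem_nhds]
  refine fun g₀ hg₀ =>
    (isCompact_sphere 0 1).eventually_forall_of_forall_eventually fun u hu => ?_
  obtain ⟨i, hi⟩ := hg₀ u hu
  have hcont : Continuous fun p : (ι → E) × E => ⟪p.1 i, p.2⟫ := by fun_prop
  exact (hcont.continuousAt.eventually (lt_mem_nhds hi)).mono fun _ h => ⟨i, h⟩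

end InnerProductSpace

theorem stmt16_general {d m : ℕ} (K : Set (EuclideanSpace ℝ (Fin d)))
    (hKo : IsOpen K)
    (f : Fin m → EuclideanSpace ℝ (Fin d) → ℝ)
    (hf : ∀ i, ContDiffOn ℝ 1 (f i) K) :
    IsOpen {x ∈ K | coneS (Set.range fun i => gradient (f i) x) = Set.univ} := by
  have hgrad : ContinuousOn (fun x i => gradient (f i) x) K :=
    continuousOn_pi.2 fun i => (hf i).continuousOn_gradient hKo
  simp_rw [coneS_eq_hull, Submodule.coe_eq_univ]
  exact hgrad.isOpen_inter_preimage hKo isOpen_setOf_hull_range_eq_top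

/-- The type-1 central region `Cent₁ = {x ∈ K : cone({∇fᵢ(x)}) = ℝ^d}` of a family of
quasi-convex `C¹` functions on an open convex set is open. -/
theorem stmt16 {d m : ℕ} (K : Set (EuclideanSpace ℝ (Fin d)))
    (hKo : IsOpen K) (hKc : Convex ℝ K)
    (f : Fin m → EuclideanSpace ℝ (Fin d) → ℝ)
    (hf : ∀ i, ContDiffOn ℝ 1 (f i) K)
    (hq : ∀ i (ℓ : ℝ), Convex ℝ {x ∈ K | f i x < ℓ}) :
    IsOpen {x ∈ K | coneS (Set.range fun i => gradient (f i) x) = Set.univ} :=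
  stmt16_general K hKo f hf
end

section
/- Let Ω_1, ..., Ω_m be open convex subsets of ℝ^d and x_0 ∈ ℝ^d a point lying in the closure of each Ω_i but in none of the Ω_i. Suppose there exists η > 0 such that B(x_0, η) \ {x_0} ⊆ ⋃_{i=1}^m Ω_i. Then ⋃_{i=1}^m Ω_i is homotopy equivalent to the sphere S^{d−1}. -/
open Metric Set unitInterval

/-- Auxiliary general lemma: in a real normed space, if each `Ω i` is open and convex,
`x₀` is in the closure of each but in none, and a punctured ball around `x₀` is contained
in the union, then the union is homotopy equivalent to the unit sphere around `0`. -/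
theorem star_aux {E : Type*} [NormedAddCommGroup E] [NormedSpace ℝ E] {m : ℕ}
    (Ω : Fin m → Set E)
    (hopen : ∀ i, IsOpen (Ω i)) (hconv : ∀ i, Convex ℝ (Ω i))
    (x₀ : E)
    (hcl : ∀ i, x₀ ∈ closure (Ω i)) (hnot : ∀ i, x₀ ∉ Ω i)
    (η : ℝ) (hη : 0 < η) (hball : Metric.ball x₀ η \ {x₀} ⊆ ⋃ i, Ω i) :
    Nonempty (ContinuousMap.HomotopyEquiv (⋃ i, Ω i : Set E) (Metric.sphere (0 : E) 1)) := by
  set U : Set E := ⋃ i, Ω i with hU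
  have hx₀U : x₀ ∉ U := by
    simp only [hU, mem_iUnion, not_exists]
    exact hnot
  have hneU : ∀ y : U, (y : E) - x₀ ≠ 0 := by
    intro y
    intro h
    apply hx₀U
    have : (y : E) = x₀ := by
      have := sub_eq_zero.1 h
      exact this
    rw [← this]; exact y.2
  have hnpos : ∀ y : U, 0 < ‖(y : E) - x₀‖ := fun y => norm_pos_iff.2 (hneU y)
  -- key membership lemma
  have key : ∀ y : U, ∀ t : ℝ, 0 < t → (t ≤ 1 ∨ t * ‖(y : E) - x₀‖ < η) →
      x₀ + t • ((y : E) - x₀) ∈ U := by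
    intro y t ht hcond
    rcases hcond with h1 | h2
    · rcases eq_or_lt_of_le h1 with rfl | hlt
      · simpa using y.2
      · obtain ⟨i, hi⟩ := mem_iUnion.1 y.2
        have hseg : x₀ + t • ((y : E) - x₀) ∈ openSegment ℝ x₀ (y : E) := by
          rw [openSegment_eq_image]
          exact ⟨t, ⟨ht, hlt⟩, by module⟩
        have hsub := (hconv i).openSegment_closure_interior_subset_interior (hcl i)
          (by rwa [(hopen i).interior_eq])
        have := hsub hseg
        rw [(hopen i).interior_eq] at this
        exact mem_iUnion.2 ⟨i, this⟩
    · apply hball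
      constructor
      · rw [Metric.mem_ball, dist_eq_norm]
        have : x₀ + t • ((y : E) - x₀) - x₀ = t • ((y : E) - x₀) := by abel
        rw [this, norm_smul, Real.norm_eq_abs, abs_of_pos ht]
        exact h2
      · simp only [mem_singleton_iff]
        intro h
        have : t • ((y : E) - x₀) = 0 := by
          have := sub_eq_zero.2 h
          rw [add_sub_cancel_left] at this
          · exact this
        rcases smul_eq_zero.1 this with h' | h'
        · exact ht.ne' h'
        · exact hneU y h'
  -- the map U → sphere
  have hf_mem : ∀ y : U, ‖(y : E) - x₀‖⁻¹ • ((y : E) - x₀) ∈ Metric.sphere (0 : E) 1 := by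
    intro y
    rw [mem_sphere_zero_iff_norm, norm_smul, Real.norm_eq_abs,
      abs_of_pos (inv_pos.2 (hnpos y)), inv_mul_cancel₀ (hnpos y).ne']
  have hcont_sub : Continuous fun y : U => (y : E) - x₀ :=
    continuous_subtype_val.sub continuous_const
  let f : C(U, Metric.sphere (0 : E) 1) :=
    ⟨fun y => ⟨‖(y : E) - x₀‖⁻¹ • ((y : E) - x₀), hf_mem y⟩, by
      apply Continuous.subtype_mk
      exact (hcont_sub.norm.inv₀ fun y => (hnpos y).ne').smul hcont_sub⟩
  -- the map sphere → U
  have hg_mem : ∀ z : Metric.sphere (0 : E) 1, x₀ + (η / 2) • (z : E) ∈ U := by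
    intro z
    have hz : ‖(z : E)‖ = 1 := mem_sphere_zero_iff_norm.1 z.2
    apply hball
    constructor
    · rw [Metric.mem_ball, dist_eq_norm]
      have : x₀ + (η / 2) • (z : E) - x₀ = (η / 2) • (z : E) := by abel
      rw [this, norm_smul, Real.norm_eq_abs, abs_of_pos (by linarith), hz, mul_one]
      linarith
    · simp only [mem_singleton_iff]
      intro h
      have : (η / 2) • (z : E) = 0 := by
        have := sub_eq_zero.2 h
        rwa [add_sub_cancel_left] at this
      rcases smul_eq_zero.1 this with h' | h'
      · linarith
      · rw [h', norm_zero] at hz; linarith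
  let g : C(Metric.sphere (0 : E) 1, U) :=
    ⟨fun z => ⟨x₀ + (η / 2) • (z : E), hg_mem z⟩, by
      apply Continuous.subtype_mk
      exact continuous_const.add (continuous_const.smul continuous_subtype_val)⟩
  -- f ∘ g = id
  have hfg : f.comp g = ContinuousMap.id _ := by
    ext z
    have hz : ‖(z : E)‖ = 1 := mem_sphere_zero_iff_norm.1 z.2
    simp only [ContinuousMap.comp_apply, ContinuousMap.id_apply, ContinuousMap.coe_mk, f, g]
    have h1 : x₀ + (η / 2) • (z : E) - x₀ = (η / 2) • (z : E) := by abel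
    rw [h1, norm_smul, Real.norm_eq_abs, abs_of_pos (by linarith : (0:ℝ) < η / 2), hz, mul_one,
      smul_smul, inv_mul_cancel₀ (by linarith : (η:ℝ) / 2 ≠ 0), one_smul]
  -- the homotopy g ∘ f ~ id
  have hc_pos : ∀ (s : I) (y : U),
      0 < (1 - (s : ℝ)) * ((η / 2) * ‖(y : E) - x₀‖⁻¹) + (s : ℝ) := by
    intro s y
    have ha : 0 < (η / 2) * ‖(y : E) - x₀‖⁻¹ := mul_pos (by linarith) (inv_pos.2 (hnpos y))
    rcases eq_or_lt_of_le s.2.1 with h | h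
    · rw [← h]; simpa using ha
    · have h2 : 0 ≤ (1 - (s : ℝ)) * ((η / 2) * ‖(y : E) - x₀‖⁻¹) :=
        mul_nonneg (by linarith [s.2.2]) ha.le
      linarith
  have hc_cond : ∀ (s : I) (y : U),
      ((1 - (s : ℝ)) * ((η / 2) * ‖(y : E) - x₀‖⁻¹) + (s : ℝ)) ≤ 1 ∨
      ((1 - (s : ℝ)) * ((η / 2) * ‖(y : E) - x₀‖⁻¹) + (s : ℝ)) * ‖(y : E) - x₀‖ < η := by
    intro s y
    set n : ℝ := ‖(y : E) - x₀‖ with hn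
    have hn0 : 0 < n := hnpos y
    rcases lt_or_ge n η with hlt | hge
    · right
      have hinv : n⁻¹ * n = 1 := inv_mul_cancel₀ hn0.ne'
      have hexp : ((1 - (s : ℝ)) * ((η / 2) * n⁻¹) + (s : ℝ)) * n
          = (1 - (s : ℝ)) * (η / 2) + (s : ℝ) * n := by
        field_simp
      rw [hexp]
      rcases eq_or_lt_of_le s.2.2 with h1 | h1
      · rw [h1]; simpa using hlt
      · have h2 : 0 < (1 - (s : ℝ)) * (η / 2) := mul_pos (by linarith) (by linarith)
        have h3 : (s : ℝ) * n ≤ (s : ℝ) * η := mul_le_mul_of_nonneg_left hlt.le s.2.1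
        nlinarith
    · left
      have ha1 : (η / 2) * n⁻¹ ≤ 1 := by
        rw [← div_eq_mul_inv]
        exact (div_le_one hn0).2 (by linarith)
      have h2 : (1 - (s : ℝ)) * ((η / 2) * n⁻¹) ≤ (1 - (s : ℝ)) :=
        (mul_le_of_le_one_right (by linarith [s.2.2]) ha1)
      linarith
  have hgf : (g.comp f).Homotopic (ContinuousMap.id U) := by
    refine ⟨{
      toFun := fun p =>
        ⟨x₀ + ((1 - (p.1 : ℝ)) * ((η / 2) * ‖(p.2 : E) - x₀‖⁻¹) + (p.1 : ℝ)) •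
          ((p.2 : E) - x₀),
          key p.2 _ (hc_pos p.1 p.2) (hc_cond p.1 p.2)⟩
      continuous_toFun := by
        apply Continuous.subtype_mk
        have hs : Continuous fun p : I × U => (p.1 : ℝ) :=
          continuous_subtype_val.comp continuous_fst
        have hy : Continuous fun p : I × U => (p.2 : E) - x₀ :=
          (continuous_subtype_val.comp continuous_snd).sub continuous_const
        have hninv : Continuous fun p : I × U => ‖(p.2 : E) - x₀‖⁻¹ :=
          hy.norm.inv₀ fun p => (hnpos p.2).ne'
        exact continuous_const.add
          ((((continuous_const.sub hs).mul (continuous_const.mul hninv)).add hs).smul hy)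
      map_zero_left := by
        intro y
        apply Subtype.ext
        simp only [ContinuousMap.comp_apply, ContinuousMap.coe_mk, f, g, Icc.coe_zero]
        rw [smul_smul]
        ring_nf
      map_one_left := by
        intro y
        apply Subtype.ext
        simp }⟩
  exact ⟨{ toFun := f, invFun := g, left_inv := hgf, right_inv := hfg ▸ ContinuousMap.Homotopic.refl _ }⟩

/-- If `x₀` lies on the boundary of each of the open convex sets `Ω i`, in none of them,
and a punctured ball around `x₀` is contained in their union, then the union is
homotopy equivalent to the sphere `S^(d-1)`. -/
theorem stmt18 {d m : ℕ} (hd : 1 ≤ d)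
    (Ω : Fin m → Set (EuclideanSpace ℝ (Fin d)))
    (hopen : ∀ i, IsOpen (Ω i)) (hconv : ∀ i, Convex ℝ (Ω i))
    (x₀ : EuclideanSpace ℝ (Fin d))
    (hcl : ∀ i, x₀ ∈ closure (Ω i)) (hnot : ∀ i, x₀ ∉ Ω i)
    (η : ℝ) (hη : 0 < η) (hball : Metric.ball x₀ η \ {x₀} ⊆ ⋃ i, Ω i) :
    Nonempty
      (ContinuousMap.HomotopyEquiv (⋃ i, Ω i : Set (EuclideanSpace ℝ (Fin d)))
        (Metric.sphere (0 : EuclideanSpace ℝ (Fin d)) 1)) := by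
  exact star_aux Ω hopen hconv x₀ hcl hnot η hη hball
end
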